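/- Let X be a Vec-variety over a field K of characteristic zero, let V ∈ Vec, and let L be a field extension of K. Then for any L-valued point p of X(V) there exists a unique minimal L-subspace U of V ⊗_K L with p ∈ X_L(U); in particular, if p ∈ X_L(U1) and p ∈ X_L(U2) for L-subspaces U1, U2 of V ⊗_K L, then p ∈ X_L(U1 ∩ U2). -/

import Mathlib

open CategoryTheory

noncomputable section

variable (K : Type) [Field K]

/-- The coordinate ring of the affine space associated to a finite-dimensional
vector space `W`: a polynomial ring on a basis of `W`, i.e. the symmetric algebra
on the dual of `W`. -/
abbrev coordRing (W : Type) [AddCommGroup W] [Module K W] : Type :=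
  MvPolynomial (Fin (Module.finrank K W)) K

/-- Evaluation of a "polynomial function on `W`" at a point `w : W`. -/
def evalAt {W : Type} [AddCommGroup W] [Module K W] [FiniteDimensional K W]
    (w : W) : coordRing K W →+* K :=
  MvPolynomial.eval (fun i => (Module.finBasis K W).repr w i)

/-- `g` is the ring homomorphism between coordinate rings induced by the
(polynomial) map `f`. -/
def IsEvalCompat {W₁ W₂ : Type} [AddCommGroup W₁] [Module K W₁] [FiniteDimensional K W₁]
    [AddCommGroup W₂] [Module K W₂] [FiniteDimensional K W₂]
    (g : coordRing K W₂ →+* coordRing K W₁) (f : W₁ → W₂) : Prop :=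
  ∀ (p : coordRing K W₂) (w : W₁), evalAt K w (g p) = evalAt K (f w) p

/-- The ring homomorphism between coordinate rings induced by a polynomial map
`f : W₁ → W₂` (pullback of polynomial functions along `f`).  Since `K` is
infinite, such a ring homomorphism is unique if it exists; it exists whenever
`f` is a polynomial map. -/
def polyComap {W₁ W₂ : Type} [AddCommGroup W₁] [Module K W₁] [FiniteDimensional K W₁]
    [AddCommGroup W₂] [Module K W₂] [FiniteDimensional K W₂]
    (f : W₁ → W₂) : coordRing K W₂ →+* coordRing K W₁ :=
  letI := Classical.propDecidable
  if h : ∃ g, IsEvalCompat K g f then h.choose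
  else (MvPolynomial.C : K →+* coordRing K W₁).comp MvPolynomial.constantCoeff

/-- `f : V → W` is a polynomial map of degree at most `d`: in (any) coordinates,
`f` is given by polynomials of total degree at most `d`. -/
def IsPolynomialMap {V W : Type} [AddCommGroup V] [Module K V]
    [AddCommGroup W] [Module K W] (d : ℕ) (f : V → W) : Prop :=
  ∃ (n m : ℕ) (eV : (Fin n → K) ≃ₗ[K] V) (eW : W ≃ₗ[K] (Fin m → K))
    (p : Fin m → MvPolynomial (Fin n) K),
    (∀ i, (p i).totalDegree ≤ d) ∧
    ∀ x : Fin n → K, eW (f (eV x)) = fun i => MvPolynomial.eval x (p i)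

/-- A polynomial functor `P` on the category `Vec` of finite-dimensional
`K`-vector spaces: a functor such that all the maps
`Hom(U,V) → Hom(P(U),P(V))` are polynomial of degree bounded by `deg`. -/
structure PolyFunctor (K : Type) [Field K] where
  obj : FGModuleCat K → FGModuleCat K
  map : ∀ {U V : FGModuleCat K}, (U →ₗ[K] V) → (obj U →ₗ[K] obj V)
  map_id : ∀ U : FGModuleCat K, map (LinearMap.id (M := U)) = LinearMap.id
  map_comp : ∀ {U V W : FGModuleCat K} (φ : U →ₗ[K] V) (ψ : V →ₗ[K] W),
    map (ψ ∘ₗ φ) = map ψ ∘ₗ map φ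
  deg : ℕ
  map_poly : ∀ U V : FGModuleCat K,
    IsPolynomialMap K deg (fun φ : U →ₗ[K] V => (map φ : obj U →ₗ[K] obj V))

/-- A (closed) `Vec`-variety `X` inside the polynomial functor `P`: for every
finite-dimensional `V`, a reduced closed subscheme `X(V) ⊆ P(V)` (given by its
radical vanishing ideal in the coordinate ring of `P(V)`), such that
`P(φ)` maps `X(U)` into `X(V)` for every linear map `φ : U → V`. -/
structure VecVariety (K : Type) [Field K] (P : PolyFunctor K) where
  ideal : ∀ V : FGModuleCat K, Ideal (coordRing K (P.obj V))
  isRadical : ∀ V, (ideal V).IsRadical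
  mapsInto : ∀ {U V : FGModuleCat K} (φ : U →ₗ[K] V),
    ∀ f ∈ ideal V, polyComap K (fun u : P.obj U => P.map φ u) f ∈ ideal U

variable {K} {P : PolyFunctor K}

/-- A local ring is regular if it is Noetherian and its Krull dimension equals
the dimension of its cotangent space (equivalently, its maximal ideal is
generated by a regular system of parameters). -/
def IsRegularLocal (R : Type) [CommRing R] [IsLocalRing R] : Prop :=
  IsNoetherianRing R ∧
    ringKrullDim R =
      (Module.finrank (IsLocalRing.ResidueField R) (IsLocalRing.CotangentSpace R) : WithBot (WithTop ℕ))

/-- The underlying closed subset `X(V)` of the spectrum of the ambient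
coordinate ring. -/
def VecVariety.zeroSet (X : VecVariety K P) (V : FGModuleCat K) :
    Set (PrimeSpectrum (coordRing K (P.obj V))) :=
  PrimeSpectrum.zeroLocus (X.ideal V : Set (coordRing K (P.obj V)))

/-- The singular locus of the scheme `X(V) = Spec(K[P(V)]/I(X(V)))`, viewed
inside the spectrum of the ambient coordinate ring. -/
def VecVariety.singSet (X : VecVariety K P) (V : FGModuleCat K) :
    Set (PrimeSpectrum (coordRing K (P.obj V))) :=
  {p | ∃ q : PrimeSpectrum ((coordRing K (P.obj V)) ⧸ X.ideal V),
        PrimeSpectrum.comap (Ideal.Quotient.mk (X.ideal V)) q = p ∧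
        ¬ IsRegularLocal (Localization.AtPrime q.asIdeal)}

/-- `Y` is a closed `Vec`-subvariety of `X`. -/
def VecVariety.IsClosedSub (Y X : VecVariety K P) : Prop :=
  ∀ V, X.ideal V ≤ Y.ideal V

end
open scoped TensorProduct

noncomputable section

/-- Base-change data for a polynomial functor `P`: the canonical extension of the
polynomial maps `P_{U,V}` to points over field extensions `L` of `K`. -/
structure PolyFunctor.BaseChange {K : Type} [Field K] (P : PolyFunctor K) where
  mapL : ∀ (L : Type) [Field L] [Algebra K L] {U V : FGModuleCat K},
    ((L ⊗[K] U) →ₗ[L] (L ⊗[K] V)) → ((L ⊗[K] P.obj U) →ₗ[L] (L ⊗[K] P.obj V))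
  mapL_id : ∀ (L : Type) [Field L] [Algebra K L] (U : FGModuleCat K),
    mapL L (LinearMap.id : (L ⊗[K] U) →ₗ[L] (L ⊗[K] U)) = LinearMap.id
  mapL_comp : ∀ (L : Type) [Field L] [Algebra K L] {U V W : FGModuleCat K}
    (φ : (L ⊗[K] U) →ₗ[L] (L ⊗[K] V)) (ψ : (L ⊗[K] V) →ₗ[L] (L ⊗[K] W)),
    mapL L (ψ ∘ₗ φ) = mapL L ψ ∘ₗ mapL L φ
  mapL_poly : ∀ (L : Type) [Field L] [Algebra K L] (U V : FGModuleCat K),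
    IsPolynomialMap L P.deg (fun φ : (L ⊗[K] U) →ₗ[L] (L ⊗[K] V) => mapL L φ)
  mapL_base : ∀ (L : Type) [Field L] [Algebra K L] {U V : FGModuleCat K} (φ : U →ₗ[K] V),
    mapL L (LinearMap.baseChange L φ) = LinearMap.baseChange L (P.map φ)

/-- Evaluation of a polynomial function on `W` at an `L`-point `w ∈ L ⊗ W`. -/
def evalAtL (K : Type) [Field K] (L : Type) [Field L] [Algebra K L] {W : Type}
    [AddCommGroup W] [Module K W] [FiniteDimensional K W] (w : L ⊗[K] W) :
    coordRing K W →+* L :=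
  MvPolynomial.eval₂Hom (algebraMap K L)
    (fun i => ((Module.finBasis K W).baseChange L).repr w i)

/-- `p` is an `L`-point of `X_L(U)` for an `L`-subspace `U ⊆ L ⊗ V`: `p` is an
`L`-point of `X(V)` lying in the image of `P_L(U) → P_L(L ⊗ V)`; the latter image
is the image of `P_L(e)` for any (equivalently, every) projection `e` of `L ⊗ V`
with range `U`. -/
def VecVariety.MemL {K : Type} [Field K] {P : PolyFunctor K} (X : VecVariety K P)
    (bc : P.BaseChange) (L : Type) [Field L] [Algebra K L] {V : FGModuleCat K}
    (p : L ⊗[K] P.obj V) (U : Submodule L (L ⊗[K] V)) : Prop :=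
  (∀ f ∈ X.ideal V, evalAtL K L p f = 0) ∧
  ∃ e : (L ⊗[K] V) →ₗ[L] (L ⊗[K] V),
    e ∘ₗ e = e ∧ LinearMap.range e = U ∧ bc.mapL L e p = p

end

/-! The subspaces `U` with `p ∈ X_L(U)` are closed under intersection. Given projections `e₁, e₂`
onto `U₁, U₂` with `P_L(eᵢ) p = p`, pick a projection `π` onto `U₁` whose kernel contains a
complement of `U₁ ⊓ U₂` in `U₂`. Then `π ∘ e₂` is a projection onto `U₁ ⊓ U₂`, and it fixes `p`
because `π ∘ e₁ = e₁` forces `P_L(π) p = p`. In finite dimension an intersection-closed family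
containing `⊤` has a least member. -/

theorem InfClosed.exists_isLeast {α : Type*} [SemilatticeInf α] [WellFoundedLT α] {s : Set α}
    (hs : InfClosed s) (hne : s.Nonempty) : ∃ a, IsLeast s a := by
  obtain ⟨a, ha⟩ := exists_minimal_of_wellFoundedLT (· ∈ s) hne
  exact ⟨a, ha.prop, fun b hb => (ha.le_of_le (hs ha.prop hb) inf_le_left).trans inf_le_right⟩

namespace LinearMap

variable {R M : Type*} [Ring R] [AddCommGroup M] [Module R M]

theorem isProj_iff_comp_self_and_range {U : Submodule R M} {e : M →ₗ[R] M} :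
    IsProj U e ↔ e ∘ₗ e = e ∧ range e = U := by
  refine ⟨fun h => ⟨h.isIdempotentElem.eq, h.range⟩, ?_⟩
  rintro ⟨he, rfl⟩
  exact IsIdempotentElem.isProj_range e he

theorem IsProj.comp_inf {U₁ U₂ : Submodule R M} {π e : M →ₗ[R] M} (hπ : IsProj U₁ π)
    (hπU₂ : ∀ x ∈ U₂, π x ∈ U₁ ⊓ U₂) (he : IsProj U₂ e) : IsProj (U₁ ⊓ U₂) (π ∘ₗ e) where
  map_mem x := hπU₂ _ (he.map_mem x)
  map_id x hx := by
    rw [comp_apply, he.map_id x (Submodule.mem_inf.mp hx).2,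
      hπ.map_id x (Submodule.mem_inf.mp hx).1]

end LinearMap

theorem Submodule.exists_isProj_mapsTo_inf {K M : Type*} [DivisionRing K] [AddCommGroup M]
    [Module K M] (U₁ U₂ : Submodule K M) :
    ∃ π : M →ₗ[K] M, LinearMap.IsProj U₁ π ∧ ∀ x ∈ U₂, π x ∈ U₁ ⊓ U₂ := by
  obtain ⟨W, hdisj, hsup⟩ :=
    IsModularLattice.exists_disjoint_and_sup_eq (inf_le_right : U₁ ⊓ U₂ ≤ U₂)
  have hWU₂ : W ≤ U₂ := hsup ▸ le_sup_right
  have hWU₁ : Disjoint W U₁ := disjoint_iff_inf_le.mpr <|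
    (le_inf (le_inf inf_le_right (inf_le_left.trans hWU₂)) inf_le_left).trans hdisj.le_bot
  obtain ⟨C, hWC, hC⟩ := hWU₁.exists_isCompl
  refine ⟨U₁.projection C hC.symm,
    ⟨projection_apply_mem _, fun x hx => projection_apply_of_mem_left _ hx⟩, fun x hx => ?_⟩
  rw [← hsup] at hx
  obtain ⟨w, hw, w', hw', rfl⟩ := Submodule.mem_sup.mp hx
  rw [map_add, projection_apply_of_mem_left _ (Submodule.mem_inf.mp hw).1,
    projection_apply_of_mem_right _ (hWC hw'), add_zero]
  exact hw

namespace VecVariety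

variable {K : Type} [Field K] {P : PolyFunctor K} (X : VecVariety K P) (bc : P.BaseChange)
  (L : Type) [Field L] [Algebra K L] {V : FGModuleCat K} (p : L ⊗[K] P.obj V)

theorem memL_iff_isProj (U : Submodule L (L ⊗[K] V)) :
    X.MemL bc L p U ↔ (∀ f ∈ X.ideal V, evalAtL K L p f = 0) ∧
      ∃ e, LinearMap.IsProj U e ∧ bc.mapL L e p = p := by
  simp only [MemL, LinearMap.isProj_iff_comp_self_and_range, and_assoc]

theorem memL_top (hp : ∀ f ∈ X.ideal V, evalAtL K L p f = 0) : X.MemL bc L p ⊤ :=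
  (X.memL_iff_isProj bc L p ⊤).mpr
    ⟨hp, LinearMap.id, LinearMap.IsProj.top L _, by rw [bc.mapL_id]; rfl⟩

variable {X bc L p}

theorem MemL.inf {U₁ U₂ : Submodule L (L ⊗[K] V)} (h₁ : X.MemL bc L p U₁)
    (h₂ : X.MemL bc L p U₂) : X.MemL bc L p (U₁ ⊓ U₂) := by
  obtain ⟨hp, e₁, he₁, hp₁⟩ := (X.memL_iff_isProj bc L p U₁).mp h₁
  obtain ⟨-, e₂, he₂, hp₂⟩ := (X.memL_iff_isProj bc L p U₂).mp h₂
  obtain ⟨π, hπ, hπU₂⟩ := U₁.exists_isProj_mapsTo_inf U₂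
  have hπe₁ : π ∘ₗ e₁ = e₁ := LinearMap.ext fun x => hπ.map_id _ (he₁.map_mem x)
  have hπp : bc.mapL L π p = p :=
    calc bc.mapL L π p = bc.mapL L π (bc.mapL L e₁ p) := by rw [hp₁]
      _ = bc.mapL L (π ∘ₗ e₁) p := by rw [bc.mapL_comp, LinearMap.comp_apply]
      _ = p := by rw [hπe₁, hp₁]
  refine (X.memL_iff_isProj bc L p _).mpr ⟨hp, π ∘ₗ e₂, hπ.comp_inf hπU₂ he₂, ?_⟩
  rw [bc.mapL_comp, LinearMap.comp_apply, hp₂, hπp]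

end VecVariety

open scoped TensorProduct in
theorem exists_unique_minimal_subspace_general
    (K : Type) [Field K] (P : PolyFunctor K) (bc : P.BaseChange)
    (X : VecVariety K P) (V : FGModuleCat K)
    (L : Type) [Field L] [Algebra K L] (p : L ⊗[K] P.obj V)
    (hp : ∀ f ∈ X.ideal V, evalAtL K L p f = 0) :
    (∃! U : Submodule L (L ⊗[K] V),
      X.MemL bc L p U ∧ ∀ U' : Submodule L (L ⊗[K] V), X.MemL bc L p U' → U ≤ U') ∧
    (∀ U₁ U₂ : Submodule L (L ⊗[K] V),
      X.MemL bc L p U₁ → X.MemL bc L p U₂ → X.MemL bc L p (U₁ ⊓ U₂)) := by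
  have hinf : InfClosed {U : Submodule L (L ⊗[K] V) | X.MemL bc L p U} :=
    fun _ h₁ _ h₂ => h₁.inf h₂
  obtain ⟨U, hU⟩ := hinf.exists_isLeast ⟨⊤, X.memL_top bc L p hp⟩
  exact ⟨⟨U, ⟨hU.1, fun _ h => hU.2 h⟩, fun U' hU' => (hU'.2 U hU.1).antisymm (hU.2 hU'.1)⟩,
    fun _ _ => VecVariety.MemL.inf⟩

open scoped TensorProduct in
/-- For any `L`-valued point `p` of `X(V)` there is a unique minimal `L`-subspace
`U ⊆ V ⊗ L` with `p ∈ X_L(U)`; in particular if `p ∈ X_L(U₁)` and `p ∈ X_L(U₂)`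
then `p ∈ X_L(U₁ ∩ U₂)`. -/
theorem exists_unique_minimal_subspace
    (K : Type) [Field K] [CharZero K] (P : PolyFunctor K) (bc : P.BaseChange)
    (X : VecVariety K P) (V : FGModuleCat K)
    (L : Type) [Field L] [Algebra K L] (p : L ⊗[K] P.obj V)
    (hp : ∀ f ∈ X.ideal V, evalAtL K L p f = 0) :
    (∃! U : Submodule L (L ⊗[K] V),
      X.MemL bc L p U ∧ ∀ U' : Submodule L (L ⊗[K] V), X.MemL bc L p U' → U ≤ U') ∧
    (∀ U₁ U₂ : Submodule L (L ⊗[K] V),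
      X.MemL bc L p U₁ → X.MemL bc L p U₂ → X.MemL bc L p (U₁ ⊓ U₂)) :=
  exists_unique_minimal_subspace_general K P bc X V L p hp
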